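/- For fixed k > 0, x₂ > 0, the function α ↦ e^{-i√(k²-α²)·x₂} on the interval (k-δ, k+δ) (where √(k²-α²) denotes the root with nonnegative real and imaginary parts) can be decomposed as φ₁(α) + √(α-k)·φ₂(α), where φ₁(α) = cosh(-i√(k²-α²)x₂) and φ₂(α) = -sinc~(-i√(k²-α²)x₂)·√(α+k)·x₂ are both real-analytic in α on (k-δ, k+δ) for δ < 2k; here √(α-k) denotes the root √(α-k) for α ≥ k and i√(k-α) for α < k (consistent with the branch choice). -/

import Mathlib

/-!
Put `z = -i β(α) x₂`. The factorization of `β` gives `z = -sqrtBranch k α · √(α+k) · x₂`, so the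
decomposition is just `exp z = cosh z + sinh z` with `sinh z = sincTilde z · z`.
For analyticity, `z` itself is not analytic at `α = k`, but `cosh` and `sincTilde` are even
entire functions, i.e. entire functions of `z²`, and `z² = (α² - k²) x₂²` is a polynomial in `α`
wherever `α ≥ -k`; `δ < 2k` keeps the interval inside `α > -k`, where `√(α+k)` is analytic too.
-/

/-- The regularized hyperbolic sinc function. -/
noncomputable def sincTilde (z : ℂ) : ℂ := if z = 0 then 1 else Complex.sinh z / z

/-- The branch of `√(α - k)`: `√(α-k)` for `α ≥ k` and `i√(k-α)` for `α < k`. -/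
noncomputable def sqrtBranch (k α : ℝ) : ℂ :=
  if k ≤ α then (Real.sqrt (α - k) : ℂ) else Complex.I * (Real.sqrt (k - α) : ℂ)

/-- The compatible branch of `√(k² - α²)`, factorized as
`-i · √(α-k)-branch · √(α+k)`. -/
noncomputable def betaBranch (k α : ℝ) : ℂ :=
  -Complex.I * sqrtBranch k α * (Real.sqrt (α + k) : ℂ)

open Complex FormalMultilinearSeries
open scoped Nat

section PowerSeries

variable {𝕜 : Type*} [NontriviallyNormedField 𝕜]

theorem FormalMultilinearSeries.ofScalars_radius_eq_top_of_norm_le_inv_factorial {c : ℕ → 𝕜}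
    (hc : ∀ n, ‖c n‖ ≤ (n ! : ℝ)⁻¹) : (ofScalars 𝕜 c).radius = ⊤ := by
  refine radius_eq_top_of_summable_norm _ fun r => ?_
  refine (Real.summable_pow_div_factorial r).of_nonneg_of_le (fun n => by positivity) fun n => ?_
  rw [ofScalars_norm, div_eq_inv_mul]
  gcongr
  exact hc n

theorem analyticAt_tsum_mul_pow [CompleteSpace 𝕜] {c : ℕ → 𝕜} (hc : (ofScalars 𝕜 c).radius = ⊤)
    (w : 𝕜) : AnalyticAt 𝕜 (fun w => ∑' n, c n * w ^ n) w := by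
  have hsum : ofScalarsSum c = fun w : 𝕜 => ∑' n, c n * w ^ n := by
    ext w
    simp [ofScalarsSum_eq_tsum, smul_eq_mul]
  rw [← hsum]
  exact ((ofScalars 𝕜 c).hasFPowerSeriesOnBall (by simp [hc])).analyticOnNhd w (by simp [hc])

variable {𝕜' E : Type*} [NontriviallyNormedField 𝕜'] [CompleteSpace 𝕜'] [NormedAlgebra 𝕜 𝕜']
  [NormedAddCommGroup E] [NormedSpace 𝕜 E]

theorem analyticAt_comp_of_hasSum_sq {c : ℕ → 𝕜'} (hc : (ofScalars 𝕜' c).radius = ⊤)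
    {f : 𝕜' → 𝕜'} (hf : ∀ z, HasSum (fun n => c n * (z ^ 2) ^ n) (f z)) {u : E → 𝕜'} {x : E}
    (hu : AnalyticAt 𝕜 (fun t => u t ^ 2) x) : AnalyticAt 𝕜 (fun t => f (u t)) x := by
  have hfu : (fun t => f (u t)) = fun t => ∑' n, c n * (u t ^ 2) ^ n :=
    funext fun t => (hf (u t)).tsum_eq.symm
  rw [hfu]
  exact ((analyticAt_tsum_mul_pow hc _).restrictScalars (𝕜 := 𝕜)).comp hu

end PowerSeries

theorem Complex.hasSum_cosh_sq (z : ℂ) :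
    HasSum (fun n => ((2 * n)! : ℂ)⁻¹ * (z ^ 2) ^ n) (cosh z) := by
  simpa [← pow_mul, div_eq_inv_mul] using hasSum_cosh z

theorem sinh_eq_sincTilde_mul (z : ℂ) : sinh z = sincTilde z * z := by
  rcases eq_or_ne z 0 with rfl | hz
  · simp
  · rw [sincTilde, if_neg hz, div_mul_cancel₀ _ hz]

theorem hasSum_sincTilde (z : ℂ) :
    HasSum (fun n => ((2 * n + 1)! : ℂ)⁻¹ * (z ^ 2) ^ n) (sincTilde z) := by
  rcases eq_or_ne z 0 with rfl | hz
  · convert hasSum_single (f := fun n => ((2 * n + 1)! : ℂ)⁻¹ * ((0 : ℂ) ^ 2) ^ n) 0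
      fun n hn => by simp [hn]
    simp [sincTilde]
  · rw [sincTilde, if_neg hz]
    refine ((hasSum_sinh z).div_const z).congr_fun fun n => ?_
    rw [← pow_mul, pow_succ]
    field_simp

theorem ofScalars_radius_inv_factorial_two_mul_add_eq_top (m : ℕ) :
    (ofScalars ℂ fun n => ((2 * n + m)! : ℂ)⁻¹).radius = ⊤ :=
  ofScalars_radius_eq_top_of_norm_le_inv_factorial fun n => by
    rw [norm_inv, norm_natCast]
    gcongr
    omega

theorem sqrtBranch_sq (k α : ℝ) : sqrtBranch k α ^ 2 = ((α - k : ℝ) : ℂ) := by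
  unfold sqrtBranch
  split_ifs with h
  · rw [← ofReal_pow, Real.sq_sqrt (by linarith)]
  · rw [mul_pow, I_sq, ← ofReal_pow, Real.sq_sqrt (by linarith)]
    push_cast
    ring

theorem neg_I_mul_betaBranch (k α x : ℝ) :
    -I * betaBranch k α * x = -(sqrtBranch k α * (√(α + k) : ℂ) * x) := by
  unfold betaBranch
  linear_combination (sqrtBranch k α * (√(α + k) : ℂ) * x) * I_sq

theorem neg_I_mul_betaBranch_sq {k α : ℝ} (hα : -k ≤ α) (x : ℝ) :
    (-I * betaBranch k α * x) ^ 2 = (((α - k) * (α + k) * x ^ 2 : ℝ) : ℂ) := by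
  rw [neg_I_mul_betaBranch, neg_sq, mul_pow, mul_pow, sqrtBranch_sq, ← ofReal_pow,
    Real.sq_sqrt (by linarith)]
  push_cast
  ring

theorem analyticAt_neg_I_mul_betaBranch_sq {k α : ℝ} (hα : -k < α) (x : ℝ) :
    AnalyticAt ℝ (fun α => (-I * betaBranch k α * x) ^ 2) α := by
  have hpoly : AnalyticAt ℝ (fun β : ℝ => (β - k) * (β + k) * x ^ 2) α := by fun_prop
  refine (ofRealCLM.analyticAt _ |>.comp hpoly).congr ?_
  filter_upwards [Ioi_mem_nhds hα] with β hβ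
  exact (neg_I_mul_betaBranch_sq (hβ.le) x).symm

theorem analyticAt_ofReal_sqrt_add {k α : ℝ} (hα : -k < α) :
    AnalyticAt ℝ (fun α : ℝ => (√(α + k) : ℂ)) α :=
  ofRealCLM.analyticAt _ |>.comp <|
    (Real.contDiffAt_sqrt (by linarith)).analyticAt.comp (by fun_prop)

theorem exp_decomposition_near_k_general (k x₂ δ : ℝ) (hδ' : δ < 2 * k) :
    (∀ α ∈ Set.Ioo (k - δ) (k + δ),
        Complex.exp (-Complex.I * betaBranch k α * (x₂ : ℂ)) =
          Complex.cosh (-Complex.I * betaBranch k α * (x₂ : ℂ)) +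
            sqrtBranch k α *
              (-(sincTilde (-Complex.I * betaBranch k α * (x₂ : ℂ))) *
                (Real.sqrt (α + k) : ℂ) * (x₂ : ℂ))) ∧
      AnalyticOnNhd ℝ
        (fun α : ℝ => Complex.cosh (-Complex.I * betaBranch k α * (x₂ : ℂ)))
        (Set.Ioo (k - δ) (k + δ)) ∧
      AnalyticOnNhd ℝ
        (fun α : ℝ => -(sincTilde (-Complex.I * betaBranch k α * (x₂ : ℂ))) *
          (Real.sqrt (α + k) : ℂ) * (x₂ : ℂ))
        (Set.Ioo (k - δ) (k + δ)) := by
  have hα : ∀ α ∈ Set.Ioo (k - δ) (k + δ), -k < α := fun α hα => by linarith [hα.1]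
  refine ⟨fun α _ => ?_, fun α hmem => ?_, fun α hmem => ?_⟩
  · rw [← cosh_add_sinh, sinh_eq_sincTilde_mul, neg_I_mul_betaBranch]
    ring
  · exact analyticAt_comp_of_hasSum_sq (ofScalars_radius_inv_factorial_two_mul_add_eq_top 0)
      hasSum_cosh_sq (analyticAt_neg_I_mul_betaBranch_sq (hα α hmem) x₂)
  · have hsinc := analyticAt_comp_of_hasSum_sq
      (ofScalars_radius_inv_factorial_two_mul_add_eq_top 1) hasSum_sincTilde
      (analyticAt_neg_I_mul_betaBranch_sq (hα α hmem) x₂)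
    exact (hsinc.neg.mul (analyticAt_ofReal_sqrt_add (hα α hmem))).mul analyticAt_const

theorem exp_decomposition_near_k (k x₂ δ : ℝ) (hk : 0 < k) (hx₂ : 0 < x₂)
    (hδ : 0 < δ) (hδ' : δ < 2 * k) :
    (∀ α ∈ Set.Ioo (k - δ) (k + δ),
        Complex.exp (-Complex.I * betaBranch k α * (x₂ : ℂ)) =
          Complex.cosh (-Complex.I * betaBranch k α * (x₂ : ℂ)) +
            sqrtBranch k α *
              (-(sincTilde (-Complex.I * betaBranch k α * (x₂ : ℂ))) *
                (Real.sqrt (α + k) : ℂ) * (x₂ : ℂ))) ∧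
      AnalyticOnNhd ℝ
        (fun α : ℝ => Complex.cosh (-Complex.I * betaBranch k α * (x₂ : ℂ)))
        (Set.Ioo (k - δ) (k + δ)) ∧
      AnalyticOnNhd ℝ
        (fun α : ℝ => -(sincTilde (-Complex.I * betaBranch k α * (x₂ : ℂ))) *
          (Real.sqrt (α + k) : ℂ) * (x₂ : ℂ))
        (Set.Ioo (k - δ) (k + δ)) :=
  exp_decomposition_near_k_general k x₂ δ hδ'
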